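/- arXiv:2207.00700 — 6 statements merged into one kernel-verified Lean document; each statement's English description precedes it below -/
import Mathlib

section
/- Let Q : [0,∞) → ℝ be continuous on (0,∞) and bounded below, with Q(0) = 0, and suppose there exist constants c > 0 and ε > 0 such that Q(t) ≥ c·t⁻² for all t ∈ (0, ε]. Let h : ℝ → ℝ be continuous, nonnegative and not identically zero, and let g : ℝ → ℝ be locally square-integrable with h(y) − h(x) = ∫ₓʸ g(t) dt for all x ≤ y. If the energy E[h] = ∫_{{h>0}} (½ g(x)² + Q(h(x))) dx is finite, then h(x) > 0 for every x ∈ ℝ. -/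
/-!
If `h` vanishes at `a` and is positive on one side of `a`, the Cauchy–Schwarz inequality applied
to `h(x) = ∫ₐˣ g` gives `h(x)² ≤ K |x - a|` with `K = ∫ g²` over a neighbourhood of `a`. Near `a`
the singularity `Q(t) ≥ c t⁻²` then forces the energy density to be at least `(c / K) |x - a|⁻¹`,
which is not integrable on any one-sided neighbourhood of `a`.
-/

open MeasureTheory Filter Set Topology
open scoped Interval

section CauchySchwarz

variable {g : ℝ → ℝ} {u v : ℝ}

/-- No measurability of `g` is needed: if `g` is not interval integrable its integral is `0`. -/
lemma two_mul_mul_intervalIntegral_le (s : ℝ) (huv : u ≤ v)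
    (hg : IntervalIntegrable (fun t => g t ^ 2) volume u v) :
    2 * s * ∫ t in u..v, g t ≤ (v - u) * s ^ 2 + ∫ t in u..v, g t ^ 2 := by
  have hg_sq_nonneg : 0 ≤ ∫ t in u..v, g t ^ 2 :=
    intervalIntegral.integral_nonneg huv fun _ _ => sq_nonneg _
  by_cases hgi : IntervalIntegrable g volume u v
  · calc 2 * s * ∫ t in u..v, g t = ∫ t in u..v, 2 * s * g t :=
          (intervalIntegral.integral_const_mul _ _).symm
      _ ≤ ∫ t in u..v, (s ^ 2 + g t ^ 2) :=
          intervalIntegral.integral_mono_on huv (hgi.const_mul _) (intervalIntegrable_const.add hg)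
            fun t _ => by nlinarith [sq_nonneg (g t - s)]
      _ = (v - u) * s ^ 2 + ∫ t in u..v, g t ^ 2 := by
          rw [intervalIntegral.integral_add intervalIntegrable_const hg,
            intervalIntegral.integral_const, smul_eq_mul]
  · rw [intervalIntegral.integral_undef hgi, mul_zero]
    nlinarith [sq_nonneg s]

/-- Cauchy–Schwarz, obtained from the previous bound with `s = (∫ g) / (v - u)`. -/
lemma sq_intervalIntegral_le (hg : IntervalIntegrable (fun t => g t ^ 2) volume u v) :
    (∫ t in u..v, g t) ^ 2 ≤ |v - u| * ∫ t in Ι u v, g t ^ 2 := by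
  wlog huv : u ≤ v generalizing u v
  · simpa only [intervalIntegral.integral_symm u v, neg_sq, abs_sub_comm, uIoc_comm] using
      this hg.symm (le_of_not_ge huv)
  rw [abs_of_nonneg (sub_nonneg.2 huv), uIoc_of_le huv, ← intervalIntegral.integral_of_le huv]
  rcases huv.eq_or_lt with rfl | hlt
  · simp
  set I := ∫ t in u..v, g t
  have hL : 0 < v - u := sub_pos.2 hlt
  have hAMGM := two_mul_mul_intervalIntegral_le (I / (v - u)) huv hg
  have hI : I ^ 2 / (v - u) ≤ ∫ t in u..v, g t ^ 2 := by
    have e₁ : 2 * (I / (v - u)) * I = 2 * (I ^ 2 / (v - u)) := by ring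
    have e₂ : (v - u) * (I / (v - u)) ^ 2 = I ^ 2 / (v - u) := by field_simp
    linarith
  rw [div_le_iff₀ hL] at hI
  linarith

end CauchySchwarz

lemma sub_eq_intervalIntegral_of_forall_le {h g : ℝ → ℝ}
    (hfund : ∀ x y : ℝ, x ≤ y → h y - h x = ∫ t in x..y, g t) (x y : ℝ) :
    h y - h x = ∫ t in x..y, g t := by
  rcases le_total x y with hxy | hyx
  · exact hfund x y hxy
  · rw [intervalIntegral.integral_symm, ← hfund y x hyx, neg_sub]

lemma sq_le_mul_abs_sub_of_eq_zero {h g : ℝ → ℝ} {a b x : ℝ}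
    (hfund : ∀ x y : ℝ, x ≤ y → h y - h x = ∫ t in x..y, g t)
    (hg : IntegrableOn (fun t => g t ^ 2) (uIcc a b)) (ha : h a = 0) (hx : x ∈ uIcc a b) :
    h x ^ 2 ≤ (∫ t in uIcc a b, g t ^ 2) * |x - a| := by
  have hsub : Ι a x ⊆ uIcc a b := uIoc_subset_uIcc.trans (uIcc_subset_uIcc_left hx)
  have hx_eq : h x = ∫ t in a..x, g t := by
    simpa [ha] using sub_eq_intervalIntegral_of_forall_le hfund a x
  calc h x ^ 2 ≤ |x - a| * ∫ t in Ι a x, g t ^ 2 :=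
        hx_eq ▸ sq_intervalIntegral_le (intervalIntegrable_iff.2 (hg.mono_set hsub))
    _ ≤ |x - a| * ∫ t in uIcc a b, g t ^ 2 := by
        refine mul_le_mul_of_nonneg_left ?_ (abs_nonneg _)
        exact setIntegral_mono_set hg (Eventually.of_forall fun _ => sq_nonneg _)
          hsub.eventuallyLE
    _ = (∫ t in uIcc a b, g t ^ 2) * |x - a| := mul_comm _ _

lemma not_integrableOn_uIoo_inv_abs_sub {a b : ℝ} (hab : a ≠ b) :
    ¬ IntegrableOn (fun x => |x - a|⁻¹) (uIoo a b) := by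
  intro hint
  have : IntervalIntegrable (fun x => (x - a)⁻¹) volume a b := by
    rw [intervalIntegrable_iff, uIoc, integrableOn_Ioc_iff_integrableOn_Ioo]
    refine hint.mono' (by fun_prop) (Eventually.of_forall fun x => ?_)
    rw [norm_inv, Real.norm_eq_abs]
  simp [hab] at this

lemma not_integrableOn_of_div_sq_le {φ f : ℝ → ℝ} {a b c K : ℝ} (hc : 0 < c) (hab : a ≠ b)
    (hpos : ∀ x ∈ uIoo a b, 0 < φ x) (hsq : ∀ x ∈ uIoo a b, φ x ^ 2 ≤ K * |x - a|)
    (hf : ∀ x ∈ uIoo a b, c / φ x ^ 2 ≤ f x) :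
    ¬ IntegrableOn f (uIoo a b) := by
  have hmid : (a + b) / 2 ∈ uIoo a b := by
    rcases hab.lt_or_gt with hlt | hlt
    · rw [uIoo_of_lt hlt]; constructor <;> linarith
    · rw [uIoo_of_gt hlt]; constructor <;> linarith
  have hK : 0 < K := by
    have := (pow_pos (hpos _ hmid) 2).trans_le (hsq _ hmid)
    exact pos_of_mul_pos_left this (abs_nonneg _)
  have hlower : ∀ x ∈ uIoo a b, c / K * |x - a|⁻¹ ≤ f x := fun x hx => by
    have hφ : 0 < φ x ^ 2 := pow_pos (hpos x hx) 2
    calc c / K * |x - a|⁻¹ = c / (K * |x - a|) := by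
          rw [← div_eq_mul_inv, div_div]
      _ ≤ c / φ x ^ 2 := div_le_div_of_nonneg_left hc.le hφ (hsq x hx)
      _ ≤ f x := hf x hx
  intro hint
  refine not_integrableOn_uIoo_inv_abs_sub hab
    ((integrable_const_mul_iff (div_pos hc hK).ne'.isUnit _).1 ?_)
  refine hint.mono' (by fun_prop) ?_
  filter_upwards [ae_restrict_mem measurableSet_Ioo] with x hx
  rw [Real.norm_eq_abs, abs_of_nonneg (by positivity)]
  exact hlower x hx

lemma exists_uIoo_subset_of_mem_nhds {a x₁ : ℝ} {U : Set ℝ} (hU : U ∈ 𝓝 a) (hne : a ≠ x₁) :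
    ∃ b, b ≠ a ∧ uIoo a b ⊆ uIoo a x₁ ∩ U := by
  rcases hne.lt_or_gt with hlt | hlt
  · have : uIoo a x₁ ∩ U ∈ 𝓝[>] a :=
      inter_mem (uIoo_of_lt hlt ▸ Ioo_mem_nhdsGT hlt) (nhdsWithin_le_nhds hU)
    obtain ⟨b, hb, hsub⟩ := mem_nhdsGT_iff_exists_Ioo_subset.1 this
    exact ⟨b, (mem_Ioi.1 hb).ne', uIoo_of_lt (mem_Ioi.1 hb) ▸ hsub⟩
  · have : uIoo a x₁ ∩ U ∈ 𝓝[<] a :=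
      inter_mem (uIoo_of_gt hlt ▸ Ioo_mem_nhdsLT hlt) (nhdsWithin_le_nhds hU)
    obtain ⟨b, hb, hsub⟩ := mem_nhdsLT_iff_exists_Ioo_subset.1 this
    exact ⟨b, (mem_Iio.1 hb).ne, uIoo_of_gt (mem_Iio.1 hb) ▸ hsub⟩

section Zeros

variable {h : ℝ → ℝ} {x₀ x₁ : ℝ}

/-- The zero of `h` between `x₀` and `x₁` closest to `x₁` has no zero between it and `x₁`. -/
lemma exists_eq_zero_forall_uIoo_pos (hh : Continuous h) (hnn : ∀ x, 0 ≤ h x)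
    (h₀ : h x₀ = 0) : ∃ a, h a = 0 ∧ ∀ x ∈ uIoo a x₁, 0 < h x := by
  set Z := uIcc x₀ x₁ ∩ h ⁻¹' {0}
  have hZ : IsCompact Z := isCompact_uIcc.inter_right (isClosed_singleton.preimage hh)
  obtain ⟨a, ⟨haI, ha⟩, hmin⟩ :=
    hZ.exists_isMinOn ⟨x₀, left_mem_uIcc, h₀⟩ (continuous_abs.comp (continuous_sub_right x₁)).continuousOn
  refine ⟨a, ha, fun x hx => (hnn x).lt_of_ne' fun hx0 => ?_⟩
  have hxI : x ∈ uIcc x₀ x₁ := uIcc_subset_uIcc haI right_mem_uIcc (uIoo_subset_uIcc_self hx)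
  have hcloser : |x - x₁| < |a - x₁| := by
    rcases le_total a x₁ with hle | hle
    · rw [uIoo_of_le hle] at hx
      rw [abs_of_nonpos (by linarith [hx.2]), abs_of_nonpos (by linarith)]; linarith [hx.1]
    · rw [uIoo_of_ge hle] at hx
      rw [abs_of_nonneg (by linarith [hx.1]), abs_of_nonneg (by linarith)]; linarith [hx.2]
  exact (hmin ⟨hxI, hx0⟩).not_gt hcloser

lemma exists_eq_zero_forall_uIoo_mem_Ioc (hh : Continuous h) (hnn : ∀ x, 0 ≤ h x)
    (h₀ : h x₀ = 0) (h₁ : 0 < h x₁) {ε : ℝ} (hε : 0 < ε) :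
    ∃ a b, a ≠ b ∧ h a = 0 ∧ ∀ x ∈ uIoo a b, h x ∈ Ioc 0 ε := by
  obtain ⟨a, ha, hpos⟩ := exists_eq_zero_forall_uIoo_pos (x₁ := x₁) hh hnn h₀
  have hsmall : {x | h x < ε} ∈ 𝓝 a := (isOpen_lt hh continuous_const).mem_nhds (by simpa [ha])
  obtain ⟨b, hba, hsub⟩ := exists_uIoo_subset_of_mem_nhds hsmall
    (show a ≠ x₁ by rintro rfl; exact h₁.ne' ha)
  exact ⟨a, b, hba.symm, ha, fun x hx => ⟨hpos x (hsub hx).1, (hsub hx).2.le⟩⟩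

end Zeros

theorem finite_energy_implies_positive_general
    (Q : ℝ → ℝ)
    (c ε : ℝ) (hc : 0 < c) (hε : 0 < ε)
    (hQsing : ∀ t ∈ Set.Ioc (0:ℝ) ε, c / t ^ 2 ≤ Q t)
    (h g : ℝ → ℝ)
    (hhcont : Continuous h) (hhnn : ∀ x, 0 ≤ h x) (hhne : ∃ x, h x ≠ 0)
    (hgloc : ∀ a b : ℝ, IntegrableOn (fun t => (g t) ^ 2) (Set.Icc a b))
    (hfund : ∀ x y : ℝ, x ≤ y → h y - h x = ∫ t in x..y, g t)
    (hE : IntegrableOn (fun x => (1/2) * (g x) ^ 2 + Q (h x)) {x | 0 < h x}) :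
    ∀ x : ℝ, 0 < h x := by
  intro x₀
  by_contra hx₀
  obtain ⟨x₁, hx₁⟩ := hhne
  obtain ⟨a, b, hab, ha, hsmall⟩ := exists_eq_zero_forall_uIoo_mem_Ioc hhcont hhnn
    (le_antisymm (not_lt.1 hx₀) (hhnn x₀)) ((hhnn x₁).lt_of_ne' hx₁) hε
  refine not_integrableOn_of_div_sq_le hc hab (fun x hx => (hsmall x hx).1)
    (fun x hx => sq_le_mul_abs_sub_of_eq_zero hfund (hgloc _ _) ha (uIoo_subset_uIcc_self hx))
    (fun x hx => ?_) (hE.mono_set fun x hx => (hsmall x hx).1)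
  calc c / h x ^ 2 ≤ Q (h x) := hQsing _ (hsmall x hx)
    _ ≤ 1 / 2 * g x ^ 2 + Q (h x) := le_add_of_nonneg_left (by positivity)

theorem finite_energy_implies_positive
    (Q : ℝ → ℝ) (hQcont : ContinuousOn Q (Set.Ioi 0))
    (hQbdd : ∃ B : ℝ, ∀ t : ℝ, 0 ≤ t → B ≤ Q t)
    (hQ0 : Q 0 = 0)
    (c ε : ℝ) (hc : 0 < c) (hε : 0 < ε)
    (hQsing : ∀ t ∈ Set.Ioc (0:ℝ) ε, c / t ^ 2 ≤ Q t)
    (h g : ℝ → ℝ)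
    (hhcont : Continuous h) (hhnn : ∀ x, 0 ≤ h x) (hhne : ∃ x, h x ≠ 0)
    (hgloc : ∀ a b : ℝ, IntegrableOn (fun t => (g t) ^ 2) (Set.Icc a b))
    (hfund : ∀ x y : ℝ, x ≤ y → h y - h x = ∫ t in x..y, g t)
    (hE : IntegrableOn (fun x => (1/2) * (g x) ^ 2 + Q (h x)) {x | 0 < h x}) :
    ∀ x : ℝ, 0 < h x :=
  finite_energy_implies_positive_general Q c ε hc hε hQsing h g hhcont hhnn hhne hgloc hfund hE
end

section
/- Let Q : [0,∞) → ℝ be continuous on (0,∞) and bounded below, with Q(0) = 0, and suppose there exist constants c > 0 and ε > 0 such that Q(t) ≥ c·t⁻² for all t ∈ (0, ε]. Let h : ℝ → ℝ be continuous, nonnegative and not identically zero, and let g : ℝ → ℝ be locally square-integrable with h(y) − h(x) = ∫ₓʸ g(t) dt for all x ≤ y. If the energy E[h] = ∫_{{h>0}} (½ g(x)² + Q(h(x))) dx is finite, then h(x) does not tend to 0 as x → +∞, and h(x) does not tend to 0 as x → −∞. -/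
open MeasureTheory Filter Set Topology

/-!
The singularity `Q t ≥ c / t ^ 2` makes every passage of `h` between a level `a ≤ ε` and `a / 2`
cost energy at least `√(2c) / 2`, independently of `a`: on such a passage `Q ∘ h ≥ c / a ^ 2`, and
`½ g² + c / a² ≥ (√(2c) / a) |g|` bounds the energy below by `√(2c) / a` times the total variation
of `h`, which is at least `a / 2`. The sets `h ⁻¹' (δ / 2 ^ (n + 1), δ / 2 ^ n)` are disjoint, so if
`h` came arbitrarily close to `0` the energy would be infinite. Hence `h` is bounded below by a
positive constant.
-/

lemma exists_Ioo_subset_preimage_Ioo_of_le {h : ℝ → ℝ} (hh : Continuous h) {a b t s : ℝ}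
    (hts : t ≤ s) (ht : a ≤ h t) (hs : h s ≤ b) :
    ∃ u v, u ≤ v ∧ a ≤ h u ∧ h v ≤ b ∧ Ioo u v ⊆ h ⁻¹' Ioo b a := by
  set K := Icc t s ∩ h ⁻¹' Iic b
  have hKbdd : BddBelow K := ⟨t, fun x hx => hx.1.1⟩
  have hvK : sInf K ∈ K :=
    (isClosed_Icc.inter (isClosed_Iic.preimage hh)).csInf_mem ⟨s, ⟨hts, le_rfl⟩, hs⟩ hKbdd
  set v := sInf K
  set K' := Icc t v ∩ h ⁻¹' Ici a
  have hK'bdd : BddAbove K' := ⟨v, fun x hx => hx.1.2⟩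
  have huK' : sSup K' ∈ K' :=
    (isClosed_Icc.inter (isClosed_Ici.preimage hh)).csSup_mem ⟨t, ⟨le_rfl, hvK.1.1⟩, ht⟩ hK'bdd
  refine ⟨sSup K', v, huK'.1.2, huK'.2, hvK.2, fun x hx => ⟨?_, ?_⟩⟩
  · by_contra hxb
    have : v ≤ x := csInf_le hKbdd
      ⟨⟨huK'.1.1.trans hx.1.le, hx.2.le.trans hvK.1.2⟩, not_lt.mp hxb⟩
    exact this.not_gt hx.2
  · by_contra hxa
    have : x ≤ sSup K' := le_csSup hK'bdd ⟨⟨huK'.1.1.trans hx.1.le, hx.2.le⟩, not_lt.mp hxa⟩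
    exact this.not_gt hx.1

lemma exists_Ioo_subset_preimage_Ioo {h : ℝ → ℝ} (hh : Continuous h) {a b t s : ℝ}
    (ht : a ≤ h t) (hs : h s ≤ b) :
    ∃ u v, u ≤ v ∧ a - b ≤ |h v - h u| ∧ Ioo u v ⊆ h ⁻¹' Ioo b a := by
  rcases le_total t s with hts | hst
  · obtain ⟨u, v, huv, hu, hv, hsub⟩ := exists_Ioo_subset_preimage_Ioo_of_le hh hts ht hs
    refine ⟨u, v, huv, ?_, hsub⟩
    rw [abs_sub_comm]
    exact le_abs.mpr (Or.inl (by linarith))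
  · obtain ⟨u, v, huv, hu, hv, hsub⟩ := exists_Ioo_subset_preimage_Ioo_of_le
      (hh.comp continuous_neg) (neg_le_neg hst) (by simpa using ht) (by simpa using hs)
    simp only [Function.comp_apply] at hu hv
    refine ⟨-v, -u, neg_le_neg huv, le_abs.mpr (Or.inl (by linarith)), fun x hx => ?_⟩
    simpa using hsub (show -x ∈ Ioo u v from ⟨lt_neg.mpr hx.2, neg_lt.mpr hx.1⟩)

lemma mul_abs_intervalIntegral_le_setIntegral {φ g : ℝ → ℝ} {k u v : ℝ} (hk : 0 ≤ k)
    (huv : u ≤ v) (hφ : ∀ x ∈ Ioo u v, k ^ 2 / 2 ≤ φ x)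
    (hint : IntegrableOn (fun x => 1 / 2 * g x ^ 2 + φ x) (Ioo u v)) :
    k * |∫ x in u..v, g x| ≤ ∫ x in Ioo u v, (1 / 2 * g x ^ 2 + φ x) := by
  have habs : |∫ x in u..v, g x| ≤ ∫ x in Ioo u v, |g x| := by
    rw [intervalIntegral.integral_of_le huv, ← integral_Ioc_eq_integral_Ioo]
    exact norm_integral_le_integral_norm g
  calc k * |∫ x in u..v, g x| ≤ k * ∫ x in Ioo u v, |g x| := by gcongr
    _ = ∫ x in Ioo u v, k * |g x| := (integral_const_mul k _).symm
    _ ≤ ∫ x in Ioo u v, (1 / 2 * g x ^ 2 + φ x) :=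
      integral_mono_of_nonneg (ae_of_all _ fun x => by positivity) hint <|
        ae_restrict_of_forall_mem measurableSet_Ioo fun x hx => by
          nlinarith [hφ x hx, sq_nonneg (|g x| - k), sq_abs (g x)]

lemma le_setIntegral_energy_preimage_Ioo {Q g h : ℝ → ℝ} {c ε a b t s : ℝ} (hc : 0 ≤ c)
    (hQsing : ∀ t ∈ Ioc (0 : ℝ) ε, c / t ^ 2 ≤ Q t) (hh : Continuous h)
    (hfund : ∀ x y : ℝ, x ≤ y → h y - h x = ∫ t in x..y, g t)
    (hb : 0 ≤ b) (hba : b < a) (haε : a ≤ ε) (ht : a ≤ h t) (hs : h s ≤ b)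
    (hE : IntegrableOn (fun x => 1 / 2 * g x ^ 2 + Q (h x)) (h ⁻¹' Ioo b a)) :
    √(2 * c) * (a - b) / a ≤ ∫ x in h ⁻¹' Ioo b a, (1 / 2 * g x ^ 2 + Q (h x)) := by
  obtain ⟨u, v, huv, hjump, hsub⟩ := exists_Ioo_subset_preimage_Ioo hh ht hs
  have ha : 0 < a := hb.trans_lt hba
  have hQ : ∀ x ∈ h ⁻¹' Ioo b a, c / a ^ 2 ≤ Q (h x) := fun x hx => by
    have hpos : 0 < h x := hb.trans_lt hx.1
    calc c / a ^ 2 ≤ c / h x ^ 2 := by gcongr; exact hx.2.le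
      _ ≤ Q (h x) := hQsing _ ⟨hpos, hx.2.le.trans haε⟩
  have hk : (√(2 * c) / a) ^ 2 / 2 = c / a ^ 2 := by
    rw [div_pow, Real.sq_sqrt (by positivity)]
    ring
  calc √(2 * c) * (a - b) / a ≤ √(2 * c) / a * |∫ x in u..v, g x| := by
        rw [← hfund u v huv, mul_div_right_comm]
        gcongr
    _ ≤ ∫ x in Ioo u v, (1 / 2 * g x ^ 2 + Q (h x)) :=
        mul_abs_intervalIntegral_le_setIntegral (by positivity) huv
          (fun x hx => hk ▸ hQ x (hsub hx)) (hE.mono_set hsub)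
    _ ≤ ∫ x in h ⁻¹' Ioo b a, (1 / 2 * g x ^ 2 + Q (h x)) :=
        setIntegral_mono_set hE (ae_restrict_of_forall_mem
          (measurableSet_Ioo.preimage hh.measurable) fun x hx =>
            add_nonneg (by positivity) ((by positivity : 0 ≤ c / a ^ 2).trans (hQ x hx)))
          hsub.eventuallyLE

theorem exists_pos_le_of_integrableOn_energy {Q g h : ℝ → ℝ} {c ε : ℝ} (hc : 0 < c)
    (hε : 0 < ε) (hQsing : ∀ t ∈ Ioc (0 : ℝ) ε, c / t ^ 2 ≤ Q t) (hh : Continuous h)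
    (hnn : ∀ x, 0 ≤ h x) (hne : ∃ x, h x ≠ 0)
    (hfund : ∀ x y : ℝ, x ≤ y → h y - h x = ∫ t in x..y, g t)
    (hE : IntegrableOn (fun x => 1 / 2 * g x ^ 2 + Q (h x)) {x | 0 < h x}) :
    ∃ m > 0, ∀ x, m ≤ h x := by
  by_contra! hsmall
  obtain ⟨x₀, hx₀⟩ := hne
  set δ := min ε (h x₀)
  have hδ : 0 < δ := lt_min hε ((hnn x₀).lt_of_ne' hx₀)
  set level : ℕ → ℝ := fun n => δ / 2 ^ n
  have hlevel : Antitone level := fun m n hmn =>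
    div_le_div_of_nonneg_left hδ.le (by positivity) (pow_le_pow_right₀ one_le_two hmn)
  set S : ℕ → Set ℝ := fun n => h ⁻¹' Ioo (level (n + 1)) (level n)
  have hSpos : ⋃ n, S n ⊆ {x | 0 < h x} :=
    iUnion_subset fun n x hx => (by positivity : 0 < level (n + 1)).trans hx.1
  have hsum := hasSum_integral_iUnion (fun n => measurableSet_Ioo.preimage hh.measurable)
    (hlevel.pairwise_disjoint_on_Ioo_succ.mono fun _ _ hd => hd.preimage h) (hE.mono_set hSpos)
  have hlow : ∀ n, √(2 * c) / 2 ≤ ∫ x in S n, (1 / 2 * g x ^ 2 + Q (h x)) := by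
    intro n
    obtain ⟨s, hs⟩ := hsmall (level (n + 1)) (by positivity)
    have hlevel_le : level n ≤ δ := div_le_self hδ.le (one_le_pow₀ one_le_two)
    convert le_setIntegral_energy_preimage_Ioo hc.le hQsing hh hfund (by positivity)
      (by simp only [level]; gcongr <;> norm_num) (hlevel_le.trans (min_le_left _ _))
      (hlevel_le.trans (min_le_right _ _)) hs.le
      (hE.mono_set ((subset_iUnion S n).trans hSpos)) using 1
    simp only [level]
    field_simp
    ring
  obtain ⟨n, hn⟩ := (hsum.summable.tendsto_atTop_zero.eventually
    (gt_mem_nhds (by positivity : 0 < √(2 * c) / 2))).exists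
  exact (hlow n).not_gt hn

theorem finite_energy_implies_no_decay_at_infinity_general
    (Q : ℝ → ℝ)
    (c ε : ℝ) (hc : 0 < c) (hε : 0 < ε)
    (hQsing : ∀ t ∈ Set.Ioc (0:ℝ) ε, c / t ^ 2 ≤ Q t)
    (h g : ℝ → ℝ)
    (hhcont : Continuous h) (hhnn : ∀ x, 0 ≤ h x) (hhne : ∃ x, h x ≠ 0)
    (hfund : ∀ x y : ℝ, x ≤ y → h y - h x = ∫ t in x..y, g t)
    (hE : IntegrableOn (fun x => (1/2) * (g x) ^ 2 + Q (h x)) {x | 0 < h x}) :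
    ¬ Tendsto h atTop (𝓝 0) ∧ ¬ Tendsto h atBot (𝓝 0) := by
  obtain ⟨m, hm, hle⟩ :=
    exists_pos_le_of_integrableOn_energy hc hε hQsing hhcont hhnn hhne hfund hE
  have hfar : ∀ l : Filter ℝ, l.NeBot → ¬ Tendsto h l (𝓝 0) := fun l _ hlim =>
    let ⟨x, hx⟩ := (hlim.eventually (gt_mem_nhds hm)).exists
    (hle x).not_gt hx
  exact ⟨hfar atTop inferInstance, hfar atBot inferInstance⟩

theorem finite_energy_implies_no_decay_at_infinity
    (Q : ℝ → ℝ) (hQcont : ContinuousOn Q (Set.Ioi 0))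
    (hQbdd : ∃ B : ℝ, ∀ t : ℝ, 0 ≤ t → B ≤ Q t)
    (hQ0 : Q 0 = 0)
    (c ε : ℝ) (hc : 0 < c) (hε : 0 < ε)
    (hQsing : ∀ t ∈ Set.Ioc (0:ℝ) ε, c / t ^ 2 ≤ Q t)
    (h g : ℝ → ℝ)
    (hhcont : Continuous h) (hhnn : ∀ x, 0 ≤ h x) (hhne : ∃ x, h x ≠ 0)
    (hgloc : ∀ a b : ℝ, IntegrableOn (fun t => (g t) ^ 2) (Set.Icc a b))
    (hfund : ∀ x y : ℝ, x ≤ y → h y - h x = ∫ t in x..y, g t)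
    (hE : IntegrableOn (fun x => (1/2) * (g x) ^ 2 + Q (h x)) {x | 0 < h x}) :
    ¬ Tendsto h atTop (𝓝 0) ∧ ¬ Tendsto h atBot (𝓝 0) :=
  finite_energy_implies_no_decay_at_infinity_general Q c ε hc hε hQsing h g hhcont hhnn hhne hfund
    hE
end

section
/- Let m > 1 and A > 0, and let P : (0,∞) → (0,∞) be continuous with t^{m−1}·P(t) → A/(m−1) as t → 0⁺. Let δ > 0 and let H : [0,δ) → [0,∞) be continuous with H(0) = 0, H > 0 and differentiable on (0,δ) with H' > 0 on (0,δ), and suppose H'(y)² / (2·P(H(y))) → 1 as y → 0⁺. Then H(y) / y^{2/(m+1)} → (A(m+1)²/(2(m−1)))^{1/(m+1)} as y → 0⁺. -/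
/-! Set `G = H ^ ((m+1)/2)`. Its derivative is `(m+1)/2 · √(H^(m-1) H'²)`, and the balance
`H'² ∼ 2 P(H)` together with `H^(m-1) P(H) → A/(m-1)` makes it tend to
`c = (m+1)/2 · √(2A/(m-1))`. Since `G(0) = 0`, L'Hôpital gives `G(y) ∼ c y`, i.e.
`H(y) ∼ c^(2/(m+1)) y^(2/(m+1))`, and `c² = A(m+1)²/(2(m-1))`. -/

open Filter Set Topology

lemma tendsto_nhdsGT_zero_of_continuousOn_Ico {H : ℝ → ℝ} {δ : ℝ} (hδ : 0 < δ)
    (hHcont : ContinuousOn H (Ico 0 δ)) (hH0 : H 0 = 0) (hHpos : ∀ y ∈ Ioo 0 δ, 0 < H y) :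
    Tendsto H (𝓝[>] 0) (𝓝[>] 0) := by
  refine tendsto_nhdsWithin_of_tendsto_nhds_of_eventually_within _ ?_ ?_
  · have h := ((hHcont 0 ⟨le_rfl, hδ⟩).mono Ioo_subset_Ico_self).tendsto
    rwa [hH0, nhdsWithin_Ioo_eq_nhdsGT hδ] at h
  · filter_upwards [Ioo_mem_nhdsGT hδ] using hHpos

lemma tendsto_rpow_mul_sq_of_balance {α : Type*} {l : Filter α} {P : ℝ → ℝ} {u v : α → ℝ}
    {q L : ℝ} (hP : ∀ᶠ x in l, 0 < P (u x))
    (hPu : Tendsto (fun x => u x ^ q * P (u x)) l (𝓝 L))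
    (hbal : Tendsto (fun x => v x ^ 2 / (2 * P (u x))) l (𝓝 1)) :
    Tendsto (fun x => u x ^ q * v x ^ 2) l (𝓝 (2 * L)) := by
  have h := (hPu.const_mul 2).mul hbal
  rw [mul_one] at h
  refine h.congr' ?_
  filter_upwards [hP] with x hx
  field_simp

lemma rpow_half_mul_eq_sqrt {a b : ℝ} (q : ℝ) (ha : 0 ≤ a) (hb : 0 ≤ b) :
    a ^ (q / 2) * b = √(a ^ q * b ^ 2) := by
  rw [Real.sqrt_mul (Real.rpow_nonneg ha q), Real.sqrt_sq hb, Real.sqrt_eq_rpow,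
    ← Real.rpow_mul ha, div_eq_mul_one_div q]

lemma div_rpow_eq_rpow_div {a y r s : ℝ} (ha : 0 ≤ a) (hy : 0 ≤ y) (hrs : r * s = 1) :
    (a ^ r / y) ^ s = a / y ^ s := by
  rw [Real.div_rpow (Real.rpow_nonneg ha r) hy, ← Real.rpow_mul ha, hrs, Real.rpow_one]

lemma half_mul_sqrt_rpow_two_div {m A : ℝ} (hA : 0 ≤ A) (hm : 1 < m) :
    ((m + 1) / 2 * √(2 * (A / (m - 1)))) ^ (2 / (m + 1))
      = (A * (m + 1) ^ 2 / (2 * (m - 1))) ^ (1 / (m + 1)) := by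
  have hm1 : 0 < m - 1 := by linarith
  rw [show 2 / (m + 1) = 2 * (1 / (m + 1)) by ring, Real.rpow_mul (by positivity),
    Real.rpow_two, mul_pow, Real.sq_sqrt (by positivity)]
  congr 1
  field_simp

theorem contact_line_asymptotics_from_leading_balance_general
    (m A δ : ℝ) (hm : 1 < m) (hA : 0 < A) (hδ : 0 < δ)
    (P : ℝ → ℝ)
    (hPpos : ∀ t > (0:ℝ), 0 < P t)
    (hPas : Tendsto (fun t => t ^ (m-1) * P t) (𝓝[>] 0) (𝓝 (A/(m-1))))
    (H H' : ℝ → ℝ) (hHcont : ContinuousOn H (Set.Ico 0 δ)) (hH0 : H 0 = 0)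
    (hHpos : ∀ y ∈ Set.Ioo (0:ℝ) δ, 0 < H y)
    (hderiv : ∀ y ∈ Set.Ioo (0:ℝ) δ, HasDerivAt H (H' y) y)
    (hderivpos : ∀ y ∈ Set.Ioo (0:ℝ) δ, 0 < H' y)
    (hbal : Tendsto (fun y => (H' y) ^ 2 / (2 * P (H y))) (𝓝[>] 0) (𝓝 1)) :
    Tendsto (fun y => H y / y ^ (2/(m+1))) (𝓝[>] 0)
      (𝓝 ((A * (m+1)^2 / (2*(m-1))) ^ (1/(m+1)))) := by
  set r := (m + 1) / 2
  set c := r * √(2 * (A / (m - 1)))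
  have hr : 0 < r := by positivity
  have hIoo : Ioo 0 δ ∈ 𝓝[>] (0:ℝ) := Ioo_mem_nhdsGT hδ
  have hH := tendsto_nhdsGT_zero_of_continuousOn_Ico hδ hHcont hH0 hHpos
  have hPH : ∀ᶠ y in 𝓝[>] 0, 0 < P (H y) :=
    (hH.eventually eventually_mem_nhdsWithin).mono fun y hy => hPpos _ hy
  have hsq := tendsto_rpow_mul_sq_of_balance hPH (hPas.comp hH) hbal
  have hG' : Tendsto (fun y => H' y * r * H y ^ (r - 1)) (𝓝[>] 0) (𝓝 c) := by
    refine ((hsq.sqrt).const_mul r).congr' ?_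
    filter_upwards [hIoo] with y hy
    rw [show r - 1 = (m - 1) / 2 by ring,
      ← rpow_half_mul_eq_sqrt _ (hHpos y hy).le (hderivpos y hy).le]
    ring
  have hGy : Tendsto (fun y => H y ^ r / y) (𝓝[>] 0) (𝓝 c) := by
    refine HasDerivAt.lhopital_zero_right_on_Ico hδ
      (fun y hy => (hderiv y hy).rpow_const (Or.inl (hHpos y hy).ne')) (fun y _ => hasDerivAt_id y)
      (hHcont.rpow_const fun _ _ => Or.inr hr.le) continuousOn_id (fun _ _ => one_ne_zero)
      (by rw [hH0, Real.zero_rpow hr.ne']) rfl (by simpa using hG')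
  rw [← half_mul_sqrt_rpow_two_div hA.le hm]
  refine ((Real.continuousAt_rpow_const c _ (Or.inr (by positivity))).tendsto.comp hGy).congr' ?_
  filter_upwards [hIoo] with y hy
  exact div_rpow_eq_rpow_div (hHpos y hy).le hy.1.le (by simp only [r]; field_simp)

theorem contact_line_asymptotics_from_leading_balance
    (m A δ : ℝ) (hm : 1 < m) (hA : 0 < A) (hδ : 0 < δ)
    (P : ℝ → ℝ) (hPcont : ContinuousOn P (Set.Ioi 0))
    (hPpos : ∀ t > (0:ℝ), 0 < P t)
    (hPas : Tendsto (fun t => t ^ (m-1) * P t) (𝓝[>] 0) (𝓝 (A/(m-1))))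
    (H H' : ℝ → ℝ) (hHcont : ContinuousOn H (Set.Ico 0 δ)) (hH0 : H 0 = 0)
    (hHpos : ∀ y ∈ Set.Ioo (0:ℝ) δ, 0 < H y)
    (hderiv : ∀ y ∈ Set.Ioo (0:ℝ) δ, HasDerivAt H (H' y) y)
    (hderivpos : ∀ y ∈ Set.Ioo (0:ℝ) δ, 0 < H' y)
    (hbal : Tendsto (fun y => (H' y) ^ 2 / (2 * P (H y))) (𝓝[>] 0) (𝓝 1)) :
    Tendsto (fun y => H y / y ^ (2/(m+1))) (𝓝[>] 0)
      (𝓝 ((A * (m+1)^2 / (2*(m-1))) ^ (1/(m+1)))) :=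
  contact_line_asymptotics_from_leading_balance_general m A δ hm hA hδ P hPpos hPas H H' hHcont hH0
    hHpos hderiv hderivpos hbal
end

section
/- Let U ∈ ℝ, let P : (0,∞) → ℝ be twice continuously differentiable, let 0 < a < b and δ > 0, and let H : (0,δ) → (a,b) be three times continuously differentiable with H' > 0, admitting a differentiable two-sided inverse Y : (a,b) → (0,δ) (H(Y(s)) = s and Y(H(y)) = y). Define ψ : (a,b) → ℝ by ψ(s) = ½·H'(Y(s))². If U + H(y)²·(H'''(y) − P''(H(y))·H'(y)) = 0 for all y ∈ (0,δ), then ψ is twice differentiable and s²·ψ''(s) = −U/√(2ψ(s)) + s²·P''(s) for all s ∈ (a,b). -/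
/-!
Along a monotone profile `H` with inverse `Y`, the chain rule gives `Y' = 1 / H'(Y)`, hence
`ψ = ½ H'(Y)²` has `ψ' = H'(Y) · H''(Y) · Y' = H''(Y)` and `ψ'' = H'''(Y) / H'(Y)`.
Since `√(2ψ) = H'(Y)`, dividing the travelling-wave equation at `y = Y s` by `H'(Y s)` gives the
hodograph equation.
-/

open MeasureTheory Filter Set Topology

theorem HasDerivAt.half_mul_sq_comp_of_deriv_inv {g Y : ℝ → ℝ} {g' s : ℝ}
    (hg : HasDerivAt g g' (Y s)) (hY : HasDerivAt Y (g (Y s))⁻¹ s) (h0 : g (Y s) ≠ 0) :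
    HasDerivAt (fun u => 1 / 2 * g (Y u) ^ 2) g' s := by
  refine (((hg.comp s hY).fun_pow 2).const_mul (1 / 2)).congr_deriv ?_
  simp only [Function.comp_apply]
  field_simp
  norm_num
  ring

theorem hodograph_identity {U s h₁ h₃ p : ℝ} (h₁_pos : 0 < h₁)
    (hode : U + s ^ 2 * (h₃ - p * h₁) = 0) :
    s ^ 2 * (h₃ * h₁⁻¹) = -U / Real.sqrt (2 * (1 / 2 * h₁ ^ 2)) + s ^ 2 * p := by
  rw [show 2 * (1 / 2 * h₁ ^ 2) = h₁ ^ 2 by ring, Real.sqrt_sq h₁_pos.le]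
  field_simp
  linarith

theorem travelling_wave_hodograph_equation_general
    (U a b δ : ℝ)
    (P : ℝ → ℝ)
    (H Y : ℝ → ℝ)
    (hH : ContDiffOn ℝ 3 H (Set.Ioo 0 δ))
    (hH' : ∀ y ∈ Set.Ioo (0:ℝ) δ, 0 < deriv H y)
    (hYmem : ∀ s ∈ Set.Ioo a b, Y s ∈ Set.Ioo (0:ℝ) δ)
    (hYdiff : ∀ s ∈ Set.Ioo a b, DifferentiableAt ℝ Y s)
    (hHY : ∀ s ∈ Set.Ioo a b, H (Y s) = s)
    (ψ : ℝ → ℝ) (hψ : ∀ s, ψ s = (1/2) * (deriv H (Y s)) ^ 2)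
    (hode : ∀ y ∈ Set.Ioo (0:ℝ) δ,
      U + (H y) ^ 2 * (deriv (deriv (deriv H)) y - deriv (deriv P) (H y) * deriv H y) = 0) :
    ∀ s ∈ Set.Ioo a b, DifferentiableAt ℝ ψ s ∧ DifferentiableAt ℝ (deriv ψ) s ∧
      s ^ 2 * deriv (deriv ψ) s = -U / Real.sqrt (2 * ψ s) + s ^ 2 * deriv (deriv P) s := by
  have hH₁ : ContDiffOn ℝ 2 (deriv H) (Ioo 0 δ) := hH.deriv_of_isOpen isOpen_Ioo (by norm_num)
  have hH₂ : ContDiffOn ℝ 1 (deriv (deriv H)) (Ioo 0 δ) :=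
    hH₁.deriv_of_isOpen isOpen_Ioo (by norm_num)
  have hasDerivAt_of_contDiffOn {f : ℝ → ℝ} {n : WithTop ℕ∞} (hf : ContDiffOn ℝ n f (Ioo 0 δ))
      (hn : n ≠ 0) (t : ℝ) (ht : t ∈ Ioo a b) : HasDerivAt f (deriv f (Y t)) (Y t) :=
    ((hf.differentiableOn hn).differentiableAt (isOpen_Ioo.mem_nhds (hYmem t ht))).hasDerivAt
  have hY : ∀ t ∈ Ioo a b, HasDerivAt Y (deriv H (Y t))⁻¹ t := fun t ht =>
    (hasDerivAt_of_contDiffOn hH (by norm_num) t ht).of_local_left_inverse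
      (hYdiff t ht).continuousAt (hH' _ (hYmem t ht)).ne'
      (eventually_of_mem (isOpen_Ioo.mem_nhds ht) hHY)
  have hψ' : ∀ t ∈ Ioo a b, HasDerivAt ψ (deriv (deriv H) (Y t)) t := fun t ht => by
    rw [funext hψ]
    exact (hasDerivAt_of_contDiffOn hH₁ (by norm_num) t ht).half_mul_sq_comp_of_deriv_inv
      (hY t ht) (hH' _ (hYmem t ht)).ne'
  intro s hs
  have hψ'' : HasDerivAt (deriv ψ)
      (deriv (deriv (deriv H)) (Y s) * (deriv H (Y s))⁻¹) s :=
    ((hasDerivAt_of_contDiffOn hH₂ (by norm_num) s hs).comp s (hY s hs)).congr_of_eventuallyEq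
      (eventually_of_mem (isOpen_Ioo.mem_nhds hs) fun t ht => (hψ' t ht).deriv)
  refine ⟨(hψ' s hs).differentiableAt, hψ''.differentiableAt, ?_⟩
  have hode_s := hode (Y s) (hYmem s hs)
  rw [hHY s hs] at hode_s
  rw [hψ''.deriv, hψ s]
  exact hodograph_identity (hH' _ (hYmem s hs)) hode_s

theorem travelling_wave_hodograph_equation
    (U a b δ : ℝ) (ha : 0 < a) (hab : a < b) (hδ : 0 < δ)
    (P : ℝ → ℝ) (hP : ContDiffOn ℝ 2 P (Set.Ioi 0))
    (H Y : ℝ → ℝ)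
    (hH : ContDiffOn ℝ 3 H (Set.Ioo 0 δ))
    (hHmem : ∀ y ∈ Set.Ioo (0:ℝ) δ, H y ∈ Set.Ioo a b)
    (hH' : ∀ y ∈ Set.Ioo (0:ℝ) δ, 0 < deriv H y)
    (hYmem : ∀ s ∈ Set.Ioo a b, Y s ∈ Set.Ioo (0:ℝ) δ)
    (hYdiff : ∀ s ∈ Set.Ioo a b, DifferentiableAt ℝ Y s)
    (hHY : ∀ s ∈ Set.Ioo a b, H (Y s) = s)
    (hYH : ∀ y ∈ Set.Ioo (0:ℝ) δ, Y (H y) = y)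
    (ψ : ℝ → ℝ) (hψ : ∀ s, ψ s = (1/2) * (deriv H (Y s)) ^ 2)
    (hode : ∀ y ∈ Set.Ioo (0:ℝ) δ,
      U + (H y) ^ 2 * (deriv (deriv (deriv H)) y - deriv (deriv P) (H y) * deriv H y) = 0) :
    ∀ s ∈ Set.Ioo a b, DifferentiableAt ℝ ψ s ∧ DifferentiableAt ℝ (deriv ψ) s ∧
      s ^ 2 * deriv (deriv ψ) s = -U / Real.sqrt (2 * ψ s) + s ^ 2 * deriv (deriv P) s :=
  travelling_wave_hodograph_equation_general U a b δ P H Y hH hH' hYmem hYdiff hHY ψ hψ hode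
end

section
/- Let m > 1, A > 0, Λ ∈ ℝ, s ∈ ℝ, δ > 0, and let P : (0,∞) → (0,∞) be continuously differentiable with t^{m−1}·P(t) → A/(m−1) as t → 0⁺. Let h : (s−δ, s) → (0,∞) be twice continuously differentiable with h' < 0 on (s−δ, s), h(x) → 0 as x → s⁻, and −h''(x) + P'(h(x)) = Λ for all x ∈ (s−δ, s). Then h(x) / (s−x)^{2/(m+1)} → (A(m+1)²/(2(m−1)))^{1/(m+1)} as x → s⁻. -/
open Filter Set Topology

/-!
Multiplying the equation by `h'` gives the first integral
`h'² = 2 P(h) - 2 Λ h - 2 E`. Since `hᵐ⁻¹ P(h) → A/(m-1)` while `hᵐ⁻¹ h → 0`, this forces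
`hᵐ⁻¹ h'² → 2A/(m-1)`, i.e. `(h^((m+1)/2))' → -((m+1)/2) √(2A/(m-1))`. By L'Hôpital
`h^((m+1)/2) / (s - x)` tends to the same constant with the sign reversed, and raising to the
power `2/(m+1)` gives the profile.
-/

section FirstIntegral

variable {P h : ℝ → ℝ} {a b Λ : ℝ}

theorem hasDerivAt_energy (hP : DifferentiableOn ℝ P (Ioi 0)) (hh : ContDiffOn ℝ 2 h (Ioo a b))
    (hpos : ∀ x ∈ Ioo a b, 0 < h x)
    (hode : ∀ x ∈ Ioo a b, -deriv (deriv h) x + deriv P (h x) = Λ) {x : ℝ} (hx : x ∈ Ioo a b) :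
    HasDerivAt (fun y => P (h y) - deriv h y ^ 2 / 2 - Λ * h y) 0 x := by
  have hnhds : Ioo a b ∈ 𝓝 x := isOpen_Ioo.mem_nhds hx
  have hh' : HasDerivAt h (deriv h x) x :=
    ((hh.differentiableOn (by norm_num)).differentiableAt hnhds).hasDerivAt
  have hh'' : HasDerivAt (deriv h) (deriv (deriv h) x) x :=
    (((hh.deriv_of_isOpen (m := 1) isOpen_Ioo (by norm_num)).differentiableOn one_ne_zero).differentiableAt
      hnhds).hasDerivAt
  have hPh : HasDerivAt (fun y => P (h y)) (deriv P (h x) * deriv h x) x :=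
    ((hP.differentiableAt (isOpen_Ioi.mem_nhds (hpos x hx))).hasDerivAt).comp x hh'
  refine ((hPh.sub ((hh''.pow 2).div_const 2)).sub (hh'.const_mul Λ)).congr_deriv ?_
  linear_combination deriv h x * hode x hx

theorem exists_energy_eq (hP : DifferentiableOn ℝ P (Ioi 0)) (hh : ContDiffOn ℝ 2 h (Ioo a b))
    (hpos : ∀ x ∈ Ioo a b, 0 < h x)
    (hode : ∀ x ∈ Ioo a b, -deriv (deriv h) x + deriv P (h x) = Λ) :
    ∃ E, ∀ x ∈ Ioo a b, P (h x) - deriv h x ^ 2 / 2 - Λ * h x = E :=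
  isOpen_Ioo.exists_is_const_of_deriv_eq_zero isPreconnected_Ioo
    (fun _ hx => (hasDerivAt_energy hP hh hpos hode hx).differentiableAt.differentiableWithinAt)
    (fun _ hx => (hasDerivAt_energy hP hh hpos hode hx).deriv)

end FirstIntegral

section Asymptotics

variable {α : Type*} {l : Filter α} {h v : α → ℝ}

theorem tendsto_rpow_mul_sq_of_energy {P : ℝ → ℝ} {m A Λ E : ℝ} (hm : 1 < m)
    (hPas : Tendsto (fun t => t ^ (m - 1) * P t) (𝓝[>] 0) (𝓝 (A / (m - 1))))
    (hh : Tendsto h l (𝓝[>] 0)) (hE : ∀ᶠ x in l, P (h x) - v x ^ 2 / 2 - Λ * h x = E) :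
    Tendsto (fun x => h x ^ (m - 1) * v x ^ 2) l (𝓝 (2 * A / (m - 1))) := by
  have hpow : Tendsto (fun x => h x ^ (m - 1)) l (𝓝 0) := by
    simpa [Real.zero_rpow (sub_pos.2 hm).ne'] using
      (tendsto_nhds_of_tendsto_nhdsWithin hh).rpow_const (Or.inr (sub_pos.2 hm).le)
  have hlim := ((hPas.comp hh).const_mul 2).sub
    (((hpow.mul (tendsto_nhds_of_tendsto_nhdsWithin hh)).const_mul (2 * Λ)).add
      (hpow.const_mul (2 * E)))
  simp only [mul_zero, add_zero, sub_zero, Function.comp_def] at hlim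
  rw [mul_div_assoc]
  refine hlim.congr' ?_
  filter_upwards [hE] with x hx
  linear_combination (2 * h x ^ (m - 1)) * hx

theorem tendsto_rpow_mul_neg_of_tendsto_rpow_mul_sq {p K : ℝ} (hh : ∀ᶠ x in l, 0 ≤ h x)
    (hv : ∀ᶠ x in l, v x ≤ 0) (hK : Tendsto (fun x => h x ^ p * v x ^ 2) l (𝓝 K)) :
    Tendsto (fun x => h x ^ (p / 2) * -v x) l (𝓝 √K) := by
  refine (Real.continuous_sqrt.tendsto K |>.comp hK).congr' ?_
  filter_upwards [hh, hv] with x hx hvx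
  have hsq : (h x ^ (p / 2)) ^ 2 = h x ^ p := by
    rw [← Real.rpow_mul_natCast hx]
    norm_num
  rw [Function.comp_apply, ← Real.sqrt_sq (mul_nonneg (Real.rpow_nonneg hx _) (neg_nonneg.2 hvx)),
    mul_pow, neg_sq, hsq]

theorem tendsto_div_rpow_of_tendsto_rpow_div {f g : α → ℝ} {p L : ℝ} (hp : 0 < p)
    (hf : ∀ᶠ x in l, 0 ≤ f x) (hg : ∀ᶠ x in l, 0 ≤ g x)
    (hfg : Tendsto (fun x => f x ^ p / g x) l (𝓝 L)) :
    Tendsto (fun x => f x / g x ^ (1 / p)) l (𝓝 (L ^ (1 / p))) := by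
  refine ((Real.continuousAt_rpow_const L (1 / p) (Or.inr (by positivity))).tendsto.comp
    hfg).congr' ?_
  filter_upwards [hf, hg] with x hfx hgx
  rw [Function.comp_apply, Real.div_rpow (Real.rpow_nonneg hfx _) hgx, ← Real.rpow_mul hfx,
    mul_one_div_cancel hp.ne', Real.rpow_one]

end Asymptotics

theorem tendsto_div_sub_of_hasDerivAt {f f' : ℝ → ℝ} {s L : ℝ}
    (hff' : ∀ᶠ x in 𝓝[<] s, HasDerivAt f (f' x) x) (hf : Tendsto f (𝓝[<] s) (𝓝 0))
    (hf' : Tendsto f' (𝓝[<] s) (𝓝 (-L))) :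
    Tendsto (fun x => f x / (s - x)) (𝓝[<] s) (𝓝 L) := by
  refine HasDerivAt.lhopital_zero_nhdsLT (g' := fun _ => -1) hff'
    (Eventually.of_forall fun x => by simpa using (hasDerivAt_id x).const_sub s)
    (Eventually.of_forall fun _ => by norm_num) hf ?_ ?_
  · exact ((continuous_sub_left s).tendsto' s 0 (sub_self s)).mono_left nhdsWithin_le_nhds
  · simpa [div_neg] using hf'.neg

theorem mul_sqrt_rpow_eq_contact_constant {m A : ℝ} (hm : 1 < m) (hA : 0 ≤ A) :
    ((m + 1) / 2 * √(2 * A / (m - 1))) ^ (1 / ((m + 1) / 2)) =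
      (A * (m + 1) ^ 2 / (2 * (m - 1))) ^ (1 / (m + 1)) := by
  have hm1 : 0 < m - 1 := by linarith
  have hbase : (m + 1) / 2 * √(2 * A / (m - 1)) = √(A * (m + 1) ^ 2 / (2 * (m - 1))) := by
    rw [← Real.sqrt_sq (by linarith : 0 ≤ (m + 1) / 2), ← Real.sqrt_mul (by positivity)]
    congr 1
    field_simp
  rw [hbase, Real.sqrt_eq_rpow, ← Real.rpow_mul (by positivity)]
  congr 1
  field_simp

theorem steady_state_contact_angle_pi_over_two_general
    (m A Λ s δ : ℝ) (hm : 1 < m) (hA : 0 < A) (hδ : 0 < δ)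
    (P : ℝ → ℝ) (hP : ContDiffOn ℝ 1 P (Set.Ioi 0))
    (hPas : Tendsto (fun t => t ^ (m-1) * P t) (𝓝[>] 0) (𝓝 (A/(m-1))))
    (h : ℝ → ℝ) (hh : ContDiffOn ℝ 2 h (Set.Ioo (s-δ) s))
    (hpos : ∀ x ∈ Set.Ioo (s-δ) s, 0 < h x)
    (hdec : ∀ x ∈ Set.Ioo (s-δ) s, deriv h x < 0)
    (h0 : Tendsto h (𝓝[<] s) (𝓝 0))
    (hode : ∀ x ∈ Set.Ioo (s-δ) s, -(deriv (deriv h) x) + deriv P (h x) = Λ) :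
    Tendsto (fun x => h x / (s - x) ^ (2/(m+1))) (𝓝[<] s)
      (𝓝 ((A * (m+1)^2 / (2*(m-1))) ^ (1/(m+1)))) := by
  have hp : 0 < (m + 1) / 2 := by linarith
  have hI : Ioo (s - δ) s ∈ 𝓝[<] s := Ioo_mem_nhdsLT (by linarith)
  have hpos' : ∀ᶠ x in 𝓝[<] s, 0 < h x := eventually_of_mem hI hpos
  obtain ⟨E, hE⟩ := exists_energy_eq (hP.differentiableOn one_ne_zero) hh hpos hode
  have hflux : Tendsto (fun x => h x ^ ((m - 1) / 2) * -deriv h x) (𝓝[<] s)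
      (𝓝 √(2 * A / (m - 1))) :=
    tendsto_rpow_mul_neg_of_tendsto_rpow_mul_sq (hpos'.mono fun _ => le_of_lt)
      (eventually_of_mem hI fun x hx => (hdec x hx).le)
      (tendsto_rpow_mul_sq_of_energy hm hPas
        (tendsto_nhdsWithin_of_tendsto_nhds_of_eventually_within _ h0 hpos')
        (eventually_of_mem hI hE))
  have hderiv : ∀ᶠ x in 𝓝[<] s, HasDerivAt (fun y => h y ^ ((m + 1) / 2))
      (-((m + 1) / 2 * (h x ^ ((m - 1) / 2) * -deriv h x))) x := by
    filter_upwards [hI] with x hx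
    have hdx := ((hh.differentiableOn (by norm_num)).differentiableAt
      (isOpen_Ioo.mem_nhds hx)).hasDerivAt.rpow_const (p := (m + 1) / 2) (Or.inl (hpos x hx).ne')
    convert hdx using 1
    rw [show (m + 1) / 2 - 1 = (m - 1) / 2 by ring]
    ring
  have hscaled := tendsto_div_sub_of_hasDerivAt hderiv
    (by simpa [Real.zero_rpow hp.ne'] using h0.rpow_const (Or.inr hp.le))
    (hflux.const_mul ((m + 1) / 2)).neg
  rw [← mul_sqrt_rpow_eq_contact_constant hm hA.le, ← one_div_div (m + 1) 2]
  exact tendsto_div_rpow_of_tendsto_rpow_div hp (hpos'.mono fun _ => le_of_lt)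
    (eventually_of_mem hI fun x hx => sub_nonneg.2 hx.2.le) hscaled

theorem steady_state_contact_angle_pi_over_two
    (m A Λ s δ : ℝ) (hm : 1 < m) (hA : 0 < A) (hδ : 0 < δ)
    (P : ℝ → ℝ) (hP : ContDiffOn ℝ 1 P (Set.Ioi 0))
    (hPpos : ∀ t > (0:ℝ), 0 < P t)
    (hPas : Tendsto (fun t => t ^ (m-1) * P t) (𝓝[>] 0) (𝓝 (A/(m-1))))
    (h : ℝ → ℝ) (hh : ContDiffOn ℝ 2 h (Set.Ioo (s-δ) s))
    (hpos : ∀ x ∈ Set.Ioo (s-δ) s, 0 < h x)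
    (hdec : ∀ x ∈ Set.Ioo (s-δ) s, deriv h x < 0)
    (h0 : Tendsto h (𝓝[<] s) (𝓝 0))
    (hode : ∀ x ∈ Set.Ioo (s-δ) s, -(deriv (deriv h) x) + deriv P (h x) = Λ) :
    Tendsto (fun x => h x / (s - x) ^ (2/(m+1))) (𝓝[<] s)
      (𝓝 ((A * (m+1)^2 / (2*(m-1))) ^ (1/(m+1)))) :=
  steady_state_contact_angle_pi_over_two_general m A Λ s δ hm hA hδ P hP hPas h hh hpos hdec h0 hode
end

section
/- Let U > 0, a ∈ ℝ, y₁ > 0, and let H : [y₁, ∞) → (0,∞) be continuously differentiable and strictly increasing with H(y) → +∞ as y → +∞ and H'(y) > 0. Suppose there is a constant K such that for all large y: | H'(y)³/(3U) − log H(y) + (1/3)·log log H(y) − a | ≤ K · log log H(y) / log H(y). Then H'(y)³/(3U) − log( (3U)^{1/3} · y ) − a → 0 as y → +∞. -/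
open MeasureTheory Filter Set Topology

open Asymptotics Real

/-! With `L = log H`, the expansion forces `H'³ / L → 3U`, so `H' / L^{1/3} → (3U)^{1/3}` and in
particular `H' > 0` eventually (hence `H` is differentiable there). The function
`G = H / L^{1/3}` has `G' = H' L^{-1/3} (1 - 1/(3L)) → (3U)^{1/3}`, so by the mean value theorem
`G(y) / y → (3U)^{1/3}`, i.e. `log H - (1/3) log L - log ((3U)^{1/3} y) → 0`. Adding the error of
the expansion, which is `O(log L / L) → 0`, gives the claim. -/

theorem isLittleO_id_of_tendsto_deriv_zero {E : Type*} [NormedAddCommGroup E] [NormedSpace ℝ E]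
    {f f' : ℝ → E} (hf : ∀ᶠ x in atTop, HasDerivAt f (f' x) x)
    (hf' : Tendsto f' atTop (𝓝 0)) : f =o[atTop] id := by
  refine IsLittleO.of_bound fun ε hε => ?_
  obtain ⟨Y, hY⟩ := eventually_atTop.mp
    (hf.and (hf'.eventually (Metric.closedBall_mem_nhds 0 (half_pos hε))))
  have hmvt : ∀ x ≥ Y, ‖f x - f Y‖ ≤ ε / 2 * (x - Y) := fun x hx => by
    have := Convex.norm_image_sub_le_of_norm_hasDerivWithin_le
      (fun z hz => (hY z hz).1.hasDerivWithinAt) (fun z hz => by simpa using (hY z hz).2)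
      (convex_Ici Y) self_mem_Ici hx
    rwa [Real.norm_of_nonneg (sub_nonneg.mpr hx)] at this
  filter_upwards [eventually_ge_atTop Y, eventually_ge_atTop 0,
    eventually_ge_atTop (2 * ‖f Y‖ / ε - Y)] with x hxY hx0 hxf
  have hfY : ‖f Y‖ ≤ ε / 2 * (x + Y) := by
    rw [sub_le_iff_le_add, div_le_iff₀ hε] at hxf
    linarith
  calc ‖f x‖ ≤ ‖f x - f Y‖ + ‖f Y‖ := norm_le_norm_sub_add _ _
    _ ≤ ε / 2 * (x - Y) + ε / 2 * (x + Y) := add_le_add (hmvt x hxY) hfY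
    _ = ε * ‖id x‖ := by
      rw [id, Real.norm_of_nonneg hx0]
      ring

theorem tendsto_div_self_of_tendsto_deriv {f f' : ℝ → ℝ} {c : ℝ}
    (hf : ∀ᶠ x in atTop, HasDerivAt f (f' x) x) (hf' : Tendsto f' atTop (𝓝 c)) :
    Tendsto (fun x => f x / x) atTop (𝓝 c) := by
  have hlin : (fun x => f x - c * x) =o[atTop] id := by
    refine isLittleO_id_of_tendsto_deriv_zero (f' := fun x => f' x - c) ?_ ?_
    · filter_upwards [hf] with x hx
      exact (hx.sub ((hasDerivAt_id' x).const_mul c)).congr_deriv (by ring)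
    · simpa using hf'.sub_const c
  have := hlin.tendsto_div_nhds_zero.const_add c
  rw [add_zero] at this
  refine this.congr' ?_
  filter_upwards [eventually_ne_atTop 0] with x hx
  rw [id]
  field_simp
  ring

theorem tendsto_zero_of_abs_le_mul_log_div_self {α : Type*} {l : Filter α} {e L : α → ℝ} {K : ℝ}
    (hL : Tendsto L l atTop) (he : ∀ᶠ x in l, |e x| ≤ K * log (L x) / L x) :
    Tendsto e l (𝓝 0) := by
  refine squeeze_zero_norm' (by simpa only [Real.norm_eq_abs] using he) ?_
  simpa [mul_div_assoc] using (isLittleO_log_id_atTop.tendsto_div_nhds_zero.comp hL).const_mul K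

theorem tendsto_div_self_of_tendsto_sub_add_mul_log {α : Type*} {l : Filter α} {u L : α → ℝ}
    {p a : ℝ} (hL : Tendsto L l atTop)
    (h : Tendsto (fun x => u x - L x + p * log (L x) - a) l (𝓝 0)) :
    Tendsto (fun x => u x / L x) l (𝓝 1) := by
  have hlog : Tendsto (fun x => log (L x) / L x) l (𝓝 0) :=
    isLittleO_log_id_atTop.tendsto_div_nhds_zero.comp hL
  have : Tendsto (fun x => 1 + ((u x - L x + p * log (L x) - a) / L x
      - p * (log (L x) / L x) + a / L x)) l (𝓝 (1 + (0 - p * 0 + 0))) :=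
    (((h.div_atTop hL).sub (hlog.const_mul p)).add (tendsto_const_nhds.div_atTop hL)).const_add 1
  rw [mul_zero, sub_zero, add_zero, add_zero] at this
  refine this.congr' ?_
  filter_upwards [hL.eventually_ne_atTop 0] with x hx
  field_simp
  ring

theorem eventually_pos_of_tendsto_pow_div {α : Type*} {l : Filter α} {w L : α → ℝ} {b : ℝ}
    {n : ℕ} (hn : Odd n) (hb : 0 < b) (hL : ∀ᶠ x in l, 0 < L x)
    (h : Tendsto (fun x => w x ^ n / L x) l (𝓝 b)) : ∀ᶠ x in l, 0 < w x := by
  filter_upwards [h.eventually_const_lt hb, hL] with x hwL hLx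
  exact hn.pow_pos_iff.mp ((div_pos_iff_of_pos_right hLx).mp hwL)

theorem tendsto_div_rpow_of_tendsto_pow_div {α : Type*} {l : Filter α} {w L : α → ℝ} {b : ℝ}
    {n : ℕ} (hn : n ≠ 0) (hb : 0 < b) (hw : ∀ᶠ x in l, 0 < w x) (hL : ∀ᶠ x in l, 0 < L x)
    (h : Tendsto (fun x => w x ^ n / L x) l (𝓝 b)) :
    Tendsto (fun x => w x / L x ^ (1 / n : ℝ)) l (𝓝 (b ^ (1 / n : ℝ))) := by
  refine ((continuousAt_rpow_const _ _ (Or.inl hb.ne')).tendsto.comp h).congr' ?_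
  filter_upwards [hw, hL] with x hwx hLx
  rw [Function.comp_apply, div_rpow (by positivity) hLx.le, one_div,
    pow_rpow_inv_natCast hwx.le hn]

theorem HasDerivAt.div_log_rpow {H : ℝ → ℝ} {h' y p : ℝ} (hH : HasDerivAt H h' y)
    (hy : 1 < H y) :
    HasDerivAt (fun z => H z / Real.log (H z) ^ p)
      (h' / Real.log (H y) ^ p * (1 - p / Real.log (H y))) y := by
  have hL : 0 < Real.log (H y) := log_pos hy
  refine (hH.div ((hH.log (by linarith)).rpow_const (Or.inl hL.ne')) (by positivity)).congr_deriv
    ?_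
  rw [rpow_sub_one hL.ne']
  field_simp

theorem tendsto_log_sub_log_mul_of_tendsto_div_self {f : ℝ → ℝ} {c : ℝ} (hc : 0 < c)
    (h : Tendsto (fun x => f x / x) atTop (𝓝 c)) :
    Tendsto (fun x => log (f x) - log (c * x)) atTop (𝓝 0) := by
  have := ((continuousAt_log hc.ne').tendsto.comp h).sub_const (log c)
  rw [sub_self] at this
  refine this.congr' ?_
  filter_upwards [h.eventually_const_lt hc, eventually_gt_atTop 0] with x hfx hx
  have hf : f x ≠ 0 := fun h0 => by simp [h0] at hfx
  rw [Function.comp_apply, log_div hf hx.ne', log_mul hc.ne' hx.ne']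
  ring

theorem linear_log_front_bulk_behaviour_general
    (U a : ℝ) (hU : 0 < U)
    (H : ℝ → ℝ)
    (hinf : Tendsto H atTop atTop)
    (hexp : ∃ K : ℝ, ∀ᶠ y in atTop,
      |(deriv H y) ^ 3 / (3*U) - Real.log (H y) + (1/3) * Real.log (Real.log (H y)) - a| ≤
        K * Real.log (Real.log (H y)) / Real.log (H y)) :
    Tendsto (fun y => (deriv H y) ^ 3 / (3*U) - Real.log ((3*U) ^ ((1:ℝ)/3) * y) - a)
      atTop (𝓝 0) := by
  obtain ⟨K, hK⟩ := hexp
  have hL : Tendsto (fun y => log (H y)) atTop atTop := tendsto_log_atTop.comp hinf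
  have hE := tendsto_zero_of_abs_le_mul_log_div_self hL hK
  have hv : Tendsto (fun y => deriv H y ^ 3 / log (H y)) atTop (𝓝 (3 * U)) := by
    have := (tendsto_div_self_of_tendsto_sub_add_mul_log hL hE).const_mul (3 * U)
    rw [mul_one] at this
    refine this.congr fun y => ?_
    field_simp
  have hLpos : ∀ᶠ y in atTop, 0 < log (H y) := hL.eventually_gt_atTop 0
  have hvpos := eventually_pos_of_tendsto_pow_div (by decide) (by positivity) hLpos hv
  have hc : 0 < (3 * U) ^ ((1:ℝ)/3) := by positivity
  have hG : Tendsto (fun y => H y / log (H y) ^ ((1:ℝ)/3) / y) atTop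
      (𝓝 ((3 * U) ^ ((1:ℝ)/3))) := by
    refine tendsto_div_self_of_tendsto_deriv
      (f' := fun y => deriv H y / log (H y) ^ ((1:ℝ)/3) * (1 - 1 / 3 / log (H y))) ?_ ?_
    · filter_upwards [hvpos, hinf.eventually_gt_atTop 1] with y hy hHy
      exact (differentiableAt_of_deriv_ne_zero hy.ne').hasDerivAt.div_log_rpow hHy
    · simpa using (tendsto_div_rpow_of_tendsto_pow_div three_ne_zero (by positivity) hvpos hLpos
        hv).mul ((tendsto_const_nhds.div_atTop hL).const_sub 1)
  have := hE.add (tendsto_log_sub_log_mul_of_tendsto_div_self hc hG)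
  rw [add_zero] at this
  refine this.congr' ?_
  filter_upwards [hinf.eventually_gt_atTop 1] with y hy
  rw [log_div (by linarith) (rpow_pos_of_pos (log_pos hy) _).ne', log_rpow (log_pos hy)]
  ring

theorem linear_log_front_bulk_behaviour
    (U a y₁ : ℝ) (hU : 0 < U) (hy₁ : 0 < y₁)
    (H : ℝ → ℝ) (hH : ContDiffOn ℝ 1 H (Set.Ici y₁))
    (hmono : StrictMonoOn H (Set.Ici y₁))
    (hinf : Tendsto H atTop atTop)
    (hder : ∀ y ≥ y₁, 0 < deriv H y)
    (hexp : ∃ K : ℝ, ∀ᶠ y in atTop,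
      |(deriv H y) ^ 3 / (3*U) - Real.log (H y) + (1/3) * Real.log (Real.log (H y)) - a| ≤
        K * Real.log (Real.log (H y)) / Real.log (H y)) :
    Tendsto (fun y => (deriv H y) ^ 3 / (3*U) - Real.log ((3*U) ^ ((1:ℝ)/3) * y) - a)
      atTop (𝓝 0) :=
  linear_log_front_bulk_behaviour_general U a hU H hinf hexp
end
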